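/- No computable transition system is divergence-preserving branching bisimilar to the transition system T1; hence the effective transition system T1 cannot be simulated by any computable transition system up to divergence-preserving branching bisimilarity. -/

import Mathlib

namespace RTMPaper

/-! ## Labelled transition systems

An `A`-labelled transition system; transition labels are drawn from `Option A`,
where `none` plays the role of the unobservable action τ. -/

structure LTS (A : Type) where
  State : Type
  tr : State → Option A → State → Prop
  init : State
  final : Set State

namespace LTS

variable {A : Type}

/-- A τ-step. -/
def tauStep (T : LTS A) (s t : T.State) : Prop := T.tr s none t

/-- `⇒` : the reflexive–transitive closure of τ-steps. -/
def tauReach (T : LTS A) : T.State → T.State → Prop :=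
  Relation.ReflTransGen T.tauStep

/-- `s —(a)→ t` : either `s —a→ t`, or `a = τ` and `s = t`. -/
def optStep (T : LTS A) (s : T.State) (a : Option A) (t : T.State) : Prop :=
  T.tr s a t ∨ (a = none ∧ s = t)

/-- The set of outgoing transitions of a state. -/
def out (T : LTS A) (s : T.State) : Set (Option A × T.State) :=
  {p | T.tr s p.1 p.2}

def FinitelyBranching (T : LTS A) : Prop := ∀ s, (T.out s).Finite

/-- The branching degree of `T` is bounded by `B`. -/
def BranchingDegreeBoundedBy (T : LTS A) (B : ℕ) : Prop :=
  ∀ s, (T.out s).Finite ∧ (T.out s).ncard ≤ B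

def BoundedlyBranching (T : LTS A) : Prop := ∃ B, T.BranchingDegreeBoundedBy B

/-- A deterministic transition system. -/
def Deterministic (T : LTS A) : Prop :=
  (∀ s a t₁ t₂, T.tr s a t₁ → T.tr s a t₂ → t₁ = t₂) ∧
  (∀ s t, T.tr s none t → ∀ a u, T.tr s a u → a = none)

/-- Relabelling of an LTS along a map of action alphabets (τ is mapped to τ). -/
def relabel {A' : Type} (f : A → A') (T : LTS A) : LTS A' where
  State := T.State
  tr s a t := ∃ a₀ : Option A, T.tr s a₀ t ∧ a = Option.map f a₀
  init := T.init
  final := T.final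

end LTS

/-! ## (Divergence-preserving) branching bisimilarity -/

structure IsBranchingBisimulation {A : Type} (T₁ T₂ : LTS A)
    (R : T₁.State → T₂.State → Prop) : Prop where
  fwd : ∀ s₁ s₂ a s₁', R s₁ s₂ → T₁.tr s₁ a s₁' →
    ∃ s₂'' s₂', T₂.tauReach s₂ s₂'' ∧ T₂.optStep s₂'' a s₂' ∧ R s₁ s₂'' ∧ R s₁' s₂'
  bwd : ∀ s₁ s₂ a s₂', R s₁ s₂ → T₂.tr s₂ a s₂' →
    ∃ s₁'' s₁', T₁.tauReach s₁ s₁'' ∧ T₁.optStep s₁'' a s₁' ∧ R s₁'' s₂ ∧ R s₁' s₂'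
  finFwd : ∀ s₁ s₂, R s₁ s₂ → s₁ ∈ T₁.final →
    ∃ s₂', T₂.tauReach s₂ s₂' ∧ R s₁ s₂' ∧ s₂' ∈ T₂.final
  finBwd : ∀ s₁ s₂, R s₁ s₂ → s₂ ∈ T₂.final →
    ∃ s₁', T₁.tauReach s₁ s₁' ∧ R s₁' s₂ ∧ s₁' ∈ T₁.final

/-- The divergence-preservation conditions on a branching bisimulation. -/
def DivergencePreserving {A : Type} (T₁ T₂ : LTS A)
    (R : T₁.State → T₂.State → Prop) : Prop :=
  (∀ (s₂ : T₂.State) (f : ℕ → T₁.State),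
      (∀ i, T₁.tauStep (f i) (f (i + 1))) → (∀ i, R (f i) s₂) →
      ∃ s₂', Relation.TransGen T₂.tauStep s₂ s₂' ∧ ∃ i, R (f i) s₂') ∧
  (∀ (s₁ : T₁.State) (f : ℕ → T₂.State),
      (∀ i, T₂.tauStep (f i) (f (i + 1))) → (∀ i, R s₁ (f i)) →
      ∃ s₁', Relation.TransGen T₁.tauStep s₁ s₁' ∧ ∃ i, R s₁' (f i))

/-- `T₁ ≈b T₂` : branching bisimilarity. -/
def BranchingBisimilar {A : Type} (T₁ T₂ : LTS A) : Prop :=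
  ∃ R, IsBranchingBisimulation T₁ T₂ R ∧ R T₁.init T₂.init

/-- `T₁ ≈Δb T₂` : divergence-preserving branching bisimilarity. -/
def DPBranchingBisimilar {A : Type} (T₁ T₂ : LTS A) : Prop :=
  ∃ R, IsBranchingBisimulation T₁ T₂ R ∧ DivergencePreserving T₁ T₂ R ∧
    R T₁.init T₂.init

/-! ## Effective and computable transition systems -/

/-- A set of natural numbers is recursively enumerable. -/
def REset (X : Set ℕ) : Prop :=
  ∃ f : ℕ →. Unit, Partrec f ∧ ∀ n, (f n).Dom ↔ n ∈ X

/-- A (finitely branching) LTS is computable if, with respect to some injective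
codings of its labels and states into ℕ, the functions `out` and `fin` are
recursive. -/
def LTS.IsComputable {A : Type} (T : LTS A) : Prop :=
  ∃ hfb : ∀ s, (T.out s).Finite,
    ∃ (cL : Option A → ℕ) (cS : T.State → ℕ),
      Function.Injective cL ∧ Function.Injective cS ∧
      (∃ fo : ℕ → ℕ, Computable fo ∧ ∀ s,
        fo (cS s) =
          Encodable.encode
            (((hfb s).toFinset).image fun p => Nat.pair (cL p.1) (cS p.2))) ∧
      (∃ ff : ℕ → ℕ, Computable ff ∧ ∀ s,
        (s ∈ T.final → ff (cS s) = 1) ∧ (s ∉ T.final → ff (cS s) = 0))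

/-- A (finitely branching) LTS is effective if, with respect to some injective
codings of its labels and states into ℕ, its transition relation and its set of
final states are recursively enumerable. -/
def LTS.IsEffective {A : Type} (T : LTS A) : Prop :=
  T.FinitelyBranching ∧
  ∃ (cL : Option A → ℕ) (cS : T.State → ℕ),
    Function.Injective cL ∧ Function.Injective cS ∧
    REset {n | ∃ s a t, T.tr s a t ∧ n = Nat.pair (cS s) (Nat.pair (cL a) (cS t))} ∧
    REset {n | ∃ s ∈ T.final, n = cS s}

/-! ## Reactive Turing machines -/

inductive Move : Type
  | L | R
deriving DecidableEq

instance : Fintype Move :=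
  ⟨{Move.L, Move.R}, fun x => by cases x <;> simp⟩

/-- A tape instance: the content left of the head (nearest symbol first), the
symbol under the head, and the content right of the head (nearest symbol
first).  Tape symbols are `Option D`, with `none` the blank symbol □. -/
structure Tape (D : Type) where
  left : List (Option D)
  head : Option D
  right : List (Option D)

def Tape.empty (D : Type) : Tape D := ⟨[], none, []⟩

/-- Write `e` at the head position and move the head in direction `m`. -/
def Tape.writeMove {D : Type} (t : Tape D) (e : Option D) : Move → Tape D
  | .L =>
    match t.left with
    | [] => ⟨[], none, e :: t.right⟩
    | x :: l => ⟨l, x, e :: t.right⟩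
  | .R =>
    match t.right with
    | [] => ⟨e :: t.left, none, []⟩
    | x :: r => ⟨e :: t.left, x, r⟩

/-- A reactive Turing machine with action symbols `A` (labels `Option A`,
`none` being τ) and data symbols `D` (tape symbols `Option D`, `none` being
the blank symbol). -/
structure RTM (A D : Type) where
  Q : Type
  [instQ : Fintype Q]
  trans : Q → Option D → Option A → Option D → Move → Q → Prop
  init : Q
  final : Set Q

attribute [instance] RTM.instQ

/-- The transition system `T(M)` associated with an RTM `M`. -/
def RTM.lts {A D : Type} (M : RTM A D) : LTS A where
  State := M.Q × Tape D
  tr c a c' := ∃ e m, M.trans c.1 c.2.head a e m c'.1 ∧ c'.2 = c.2.writeMove e m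
  init := (M.init, Tape.empty D)
  final := {c | c.1 ∈ M.final}

def RTM.Deterministic {A D : Type} (M : RTM A D) : Prop :=
  (∀ s d a e₁ m₁ t₁ e₂ m₂ t₂, M.trans s d a e₁ m₁ t₁ → M.trans s d a e₂ m₂ t₂ →
      e₁ = e₂ ∧ m₁ = m₂ ∧ t₁ = t₂) ∧
  (∀ s d e₁ m₁ t₁, M.trans s d none e₁ m₁ t₁ →
      ∀ a e₂ m₂ t₂, M.trans s d a e₂ m₂ t₂ → a = none)

/-! ## Actions over channels, and parallel composition -/

/-- Actions over a set `C` of channels with communicated values in `V`,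
together with further (base) actions from `B`:  `recv c v` is `c?v`,
`send c v` is `c!v`. -/
inductive CAct (C V B : Type) : Type
  | recv : C → V → CAct C V B
  | send : C → V → CAct C V B
  | base : B → CAct C V B
deriving DecidableEq

/-- The (possibly silent) action `a` is a communication action on one of the
channels in `C'`. -/
def IsComm {C V B : Type} (C' : Set C) : Option (CAct C V B) → Prop
  | some (.recv c _) => c ∈ C'
  | some (.send c _) => c ∈ C'
  | _ => False

/-- Parallel composition `[T₁ ∥ T₂]_{C'}` of transition systems, enforcing
communication on the channels in `C'`. -/
def parLTS {C V B : Type} (C' : Set C) (T₁ T₂ : LTS (CAct C V B)) :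
    LTS (CAct C V B) where
  State := T₁.State × T₂.State
  init := (T₁.init, T₂.init)
  final := {p | p.1 ∈ T₁.final ∧ p.2 ∈ T₂.final}
  tr p a p' :=
    ¬ IsComm C' a ∧
    ((T₁.tr p.1 a p'.1 ∧ p.2 = p'.2) ∨
     (T₂.tr p.2 a p'.2 ∧ p.1 = p'.1) ∨
     (a = none ∧ ∃ c ∈ C', ∃ d : V,
        (T₁.tr p.1 (some (.send c d)) p'.1 ∧ T₂.tr p.2 (some (.recv c d)) p'.2) ∨
        (T₁.tr p.1 (some (.recv c d)) p'.1 ∧ T₂.tr p.2 (some (.send c d)) p'.2)))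

/-- The behaviour of `sender(M)`: output the symbols of `w` one by one along
channel `cu`, then halt in a final state. -/
def outputLTS {C V B : Type} (cu : C) (w : List V) : LTS (CAct C V B) where
  State := List V
  tr s a t := ∃ d, s = d :: t ∧ a = some (.send cu d)
  init := w
  final := {([] : List V)}

/-- A concrete (syntactic, Gödel-numberable) presentation of a reactive Turing
machine: states are `Fin (n+1)`, and the transition relation is a finite set of
tuples. -/
structure RTMc (A D : Type) where
  n : ℕ
  trans : Finset (Fin (n + 1) × Option D × Option A × Option D × Move × Fin (n + 1))
  init : Fin (n + 1)
  final : Finset (Fin (n + 1))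

def RTMc.toRTM {A D : Type} (M : RTMc A D) : RTM A D where
  Q := Fin (M.n + 1)
  trans s d a e m t := (s, d, a, e, m, t) ∈ M.trans
  init := M.init
  final := (↑M.final : Set (Fin (M.n + 1)))

end RTMPaper

namespace RTMPaper

/-- The action alphabet `A = {a, b}`. -/
inductive AB : Type
  | a | b
deriving DecidableEq

instance : Fintype AB :=
  ⟨{AB.a, AB.b}, fun x => by cases x <;> simp⟩

/-- The states of the transition system `T₁`. -/
inductive T1State : Type
  | s : ℕ → T1State
  | t : ℕ → T1State

/-- The transition system `T₁`: `s_x —a→ s_{x+1}`, `s_x —b→ t_x`, and `t_x` is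
final iff `φ_x(x)` converges. -/
def T1 : LTS AB where
  State := T1State
  init := .s 0
  final := {q | ∃ x, q = .t x ∧ ((Denumerable.ofNat Nat.Partrec.Code x).eval x).Dom}
  tr p α q :=
    (∃ x, p = .s x ∧ α = some .a ∧ q = .s (x + 1)) ∨
    (∃ x, p = .s x ∧ α = some .b ∧ q = .t x)

/-!
Since `T1` has no τ-steps, a divergence-preserving branching bisimulation between `T1` and `T'`
rules out infinite τ-runs of `T'` from states related to some `t_x`, so, `T'` being finitely
branching, their τ-closures are finite. A state `v` of `T'` reached from the initial state with
visible trace `aˣb` is related to `t_x`, and `φ_x(x)` diverges iff no state τ-reachable from `v`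
is final. For a computable `T'` this is witnessed by a finite certificate: a coded run with
trace `aˣb`, together with a τ-closed list of state codes containing its endpoint and no final
code. The complement of the diagonal halting set would then be recursively enumerable.
-/

end RTMPaper

section Computability

open Computable

variable {α β σ : Type*} [Primcodable α] [Primcodable β] [Primcodable σ]

theorem Computable.list_foldl {f : α → List β} {g : α → σ} {h : α → σ × β → σ}
    (hf : Computable f) (hg : Computable g) (hh : Computable₂ h) :
    Computable fun a => (f a).foldl (fun s b => h a (s, b)) (g a) := by
  have hrec : Computable fun a => Nat.rec (motive := fun _ => σ) (g a)
      (fun i s => (((f a)[i]?).map fun b => h a (s, b)).getD s) (f a).length :=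
    nat_rec (list_length.comp hf) hg
      (option_getD
        (option_map (list_getElem?.comp (hf.comp fst) (fst.comp snd))
          (hh.comp (fst.comp fst) ((snd.comp (snd.comp fst)).pair snd)).to₂)
        (snd.comp snd)).to₂
  refine hrec.of_eq fun a => ?_
  have take_foldl : ∀ n, Nat.rec (motive := fun _ => σ) (g a)
      (fun i s => (((f a)[i]?).map fun b => h a (s, b)).getD s) n =
      ((f a).take n).foldl (fun s b => h a (s, b)) (g a) := by
    intro n
    induction n with
    | zero => rfl
    | succ n ih =>
      rw [List.take_add_one, List.foldl_append, ← ih]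
      change (((f a)[n]?).map _).getD _ = _
      cases (f a)[n]? <;> rfl
  rw [take_foldl, List.take_length]

theorem Computable.list_all {f : α → List β} {p : α → β → Bool}
    (hf : Computable f) (hp : Computable₂ p) : Computable fun a => (f a).all (p a) := by
  have foldl_and : ∀ (l : List β) (acc : Bool) (q : β → Bool),
      l.foldl (fun s b => s && q b) acc = (acc && l.all q) := by
    intro l
    induction l with
    | nil => simp
    | cons b l ih => intro acc q; simp [ih, Bool.and_assoc]
  have hstep : Computable₂ fun a (sb : Bool × β) => sb.1 && p a sb.2 :=
    (Primrec.and.to_comp.comp (fst.comp snd) (hp.comp fst (snd.comp snd))).to₂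
  refine (Computable.list_foldl hf (const true) hstep).of_eq fun a => ?_
  simp only [foldl_and, Bool.true_and]

theorem Primrec.list_replicate (c : α) : Primrec fun n => List.replicate n c :=
  (Primrec.list_map Primrec.list_range (Primrec.const c).to₂).of_eq fun n => by simp

theorem Primrec.list_mem [DecidableEq α] : PrimrecRel fun (l : List α) (a : α) => a ∈ l :=
  (PrimrecRel.exists_mem_list Primrec.eq).of_eq fun l a => by simp

theorem REPred.comp {p : β → Prop} {f : α → β} (hp : REPred p) (hf : Computable f) :
    REPred fun a => p (f a) :=
  Partrec.comp hp hf

theorem REPred.exists_eq_true {f : α → β → Bool} (hf : Computable₂ f) :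
    REPred fun a => ∃ b, f a b = true := by
  have htest : Computable₂ fun a n => ((Encodable.decode (α := β) n).map (f a)).getD false :=
    (option_getD
      (option_map (Computable.decode.comp snd) (hf.comp (fst.comp fst) snd).to₂)
      (const false)).to₂
  have hsearch : Partrec fun a =>
      Nat.rfind fun n => Part.some (((Encodable.decode (α := β) n).map (f a)).getD false) :=
    Partrec.rfind htest.partrec₂
  refine hsearch.dom_re.of_eq fun a => ?_
  refine Nat.rfind_dom.trans ⟨?_, ?_⟩
  · rintro ⟨n, hn, -⟩
    rw [Part.mem_some_iff] at hn
    cases hd : Encodable.decode (α := β) n with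
    | none => simp [hd] at hn
    | some b => exact ⟨b, by simpa [hd] using hn.symm⟩
  · rintro ⟨b, hb⟩
    exact ⟨Encodable.encode b, by simp [Encodable.encodek, hb], fun _ => trivial⟩

theorem mem_decode_encode_finset (F : Finset ℕ) (p : ℕ) :
    p ∈ (Encodable.decode (α := List ℕ) (Encodable.encode F)).getD [] ↔ p ∈ F := by
  have h : ((↑) : List ℕ → Multiset ℕ) <$> Encodable.decode (α := List ℕ) (Encodable.encode F) =
      some F.val :=
    Encodable.encodek F.val
  simp only [Denumerable.decode_eq_ofNat, Option.map_eq_map, Option.map_some,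
    Option.some.injEq] at h
  rw [Denumerable.decode_eq_ofNat, Option.getD_some, ← Finset.mem_val, ← h, Multiset.mem_coe]

end Computability

namespace RTMPaper

namespace LTS

variable {A : Type} {T : LTS A}

inductive WeakReaches (T : LTS A) : T.State → List A → T.State → Prop
  | refl (s : T.State) : T.WeakReaches s [] s
  | tau {s t u : T.State} {w : List A} :
      T.tr s none t → T.WeakReaches t w u → T.WeakReaches s w u
  | visible {s t u : T.State} {a : A} {w : List A} :
      T.tr s (some a) t → T.WeakReaches t w u → T.WeakReaches s (a :: w) u

def TauFree (T : LTS A) : Prop := ∀ s t, ¬ T.tauStep s t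

theorem TauFree.eq_of_tauReach (hT : T.TauFree) {s t : T.State} (h : T.tauReach s t) :
    s = t := by
  induction h with
  | refl => rfl
  | tail _ hstep _ => exact absurd hstep (hT _ _)

theorem TauFree.not_transGen (hT : T.TauFree) {s t : T.State} :
    ¬ Relation.TransGen T.tauStep s t := fun h =>
  let ⟨_, hstep, _⟩ := Relation.TransGen.head'_iff.1 h
  hT _ _ hstep

theorem TauFree.weakReaches_nil_iff (hT : T.TauFree) {s t : T.State} :
    T.WeakReaches s [] t ↔ s = t := by
  constructor
  · rintro (_ | ⟨hstep, _⟩)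
    · rfl
    · exact absurd hstep (hT _ _)
  · rintro rfl
    exact .refl s

theorem TauFree.weakReaches_cons_iff (hT : T.TauFree) {s u : T.State} {a : A} {w : List A} :
    T.WeakReaches s (a :: w) u ↔ ∃ t, T.tr s (some a) t ∧ T.WeakReaches t w u := by
  constructor
  · rintro (_ | ⟨hstep, _⟩ | ⟨hstep, hrest⟩)
    · exact absurd hstep (hT _ _)
    · exact ⟨_, hstep, hrest⟩
  · rintro ⟨t, hstep, hrest⟩
    exact .visible hstep hrest

theorem WeakReaches.of_tauReach {s s' u : T.State} {w : List A} (hs : T.tauReach s s')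
    (h : T.WeakReaches s' w u) : T.WeakReaches s w u := by
  induction hs using Relation.ReflTransGen.head_induction_on with
  | refl => exact h
  | head hstep _ ih => exact .tau hstep ih

theorem WeakReaches.of_optStep {s s' u : T.State} {a : Option A} {w : List A}
    (hs : T.optStep s a s') (h : T.WeakReaches s' w u) :
    T.WeakReaches s (a.toList ++ w) u := by
  rcases hs with hs | ⟨rfl, rfl⟩
  · cases a with
    | none => exact .tau hs h
    | some a => exact .visible hs h
  · exact h

theorem finite_tauReach_of_acc (hT : T.FinitelyBranching) {u : T.State}
    (hu : Acc (fun v w => T.tauStep w v) u) : {v | T.tauReach u v}.Finite := by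
  induction hu with
  | intro u _ ih =>
    have hsucc : {v | T.tauStep u v}.Finite :=
      ((hT u).image Prod.snd).subset fun v hv => ⟨(none, v), hv, rfl⟩
    refine ((Set.finite_singleton u).union (hsucc.biUnion fun v hv => ih v hv)).subset ?_
    intro w hw
    rcases Relation.ReflTransGen.cases_head hw with rfl | ⟨v, hv, hvw⟩
    · exact Or.inl rfl
    · exact Or.inr (Set.mem_biUnion hv hvw)

end LTS

namespace IsBranchingBisimulation

variable {A : Type} {T₁ T₂ : LTS A} {R : T₁.State → T₂.State → Prop}

theorem symm (hR : IsBranchingBisimulation T₁ T₂ R) :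
    IsBranchingBisimulation T₂ T₁ (flip R) where
  fwd _ _ _ _ h h' := hR.bwd _ _ _ _ h h'
  bwd _ _ _ _ h h' := hR.fwd _ _ _ _ h h'
  finFwd _ _ h h' := hR.finBwd _ _ h h'
  finBwd _ _ h h' := hR.finFwd _ _ h h'

theorem weakReaches (hR : IsBranchingBisimulation T₁ T₂ R) {s s' : T₁.State} {u : T₂.State}
    {w : List A} (hsu : R s u) (h : T₁.WeakReaches s w s') :
    ∃ u', T₂.WeakReaches u w u' ∧ R s' u' := by
  induction h generalizing u with
  | refl => exact ⟨u, .refl u, hsu⟩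
  | tau hstep _ ih | visible hstep _ ih =>
    obtain ⟨u₁, u₂, hu₁, hu₂, -, htu⟩ := hR.fwd _ _ _ _ hsu hstep
    obtain ⟨u', hu', hR'⟩ := ih htu
    exact ⟨u', .of_tauReach hu₁ (.of_optStep hu₂ hu'), hR'⟩

theorem rel_of_tauReach (hR : IsBranchingBisimulation T₁ T₂ R) (h₁ : T₁.TauFree)
    {s : T₁.State} {u v : T₂.State} (hsu : R s u) (h : T₂.tauReach u v) : R s v := by
  obtain ⟨s', hs', hR'⟩ := hR.symm.weakReaches hsu (.of_tauReach h (.refl v))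
  rwa [h₁.weakReaches_nil_iff.1 hs']

theorem acc_tauStep (hR : IsBranchingBisimulation T₁ T₂ R)
    (hD : DivergencePreserving T₁ T₂ R) (h₁ : T₁.TauFree) {s : T₁.State} {u : T₂.State}
    (hsu : R s u) : Acc (fun v w => T₂.tauStep w v) u := by
  by_contra hacc
  obtain ⟨f, hf0, hf⟩ := not_acc_iff_exists_descending_chain.1 hacc
  have hrel : ∀ i, R s (f i) := fun i => by
    induction i with
    | zero => rwa [hf0]
    | succ i ih => exact hR.rel_of_tauReach h₁ ih (.single (hf i))
  -- divergence preservation would demand a τ-step of `T₁` from `s`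
  obtain ⟨s', hs', -⟩ := hD.2 s f hf hrel
  exact h₁.not_transGen hs'

end IsBranchingBisimulation

namespace LTS

variable {A : Type} {T : LTS A}

/-- The data of `LTS.IsComputable`, with the coded `out` decoded into a list. -/
structure ComputablePresentation (T : LTS A) where
  codeLabel : Option A → ℕ
  codeState : T.State → ℕ
  codeLabel_injective : Function.Injective codeLabel
  codeState_injective : Function.Injective codeState
  outCodes : ℕ → List ℕ
  outCodes_computable : Computable outCodes
  mem_outCodes : ∀ s p, p ∈ outCodes (codeState s) ↔
    ∃ a t, T.tr s a t ∧ p = Nat.pair (codeLabel a) (codeState t)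
  isFinal : ℕ → Bool
  isFinal_computable : Computable isFinal
  isFinal_iff : ∀ s, isFinal (codeState s) = true ↔ s ∈ T.final

theorem IsComputable.finitelyBranching (h : T.IsComputable) : T.FinitelyBranching :=
  h.elim fun hfb _ => hfb

theorem IsComputable.nonempty_presentation (h : T.IsComputable) :
    Nonempty T.ComputablePresentation := by
  obtain ⟨hfb, cL, cS, injL, injS, ⟨fo, hfo, hfo_spec⟩, ⟨ff, hff, hff_spec⟩⟩ := h
  refine ⟨{
    codeLabel := cL
    codeState := cS
    codeLabel_injective := injL
    codeState_injective := injS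
    outCodes := fun n => (Encodable.decode (α := List ℕ) (fo n)).getD []
    outCodes_computable :=
      Computable.option_getD (Computable.decode.comp hfo) (Computable.const [])
    mem_outCodes := fun s p => ?_
    isFinal := fun n => decide (ff n = 1)
    isFinal_computable := Primrec.eq.decide.to_comp.comp hff (Computable.const 1)
    isFinal_iff := fun s => ?_ }⟩
  · simp only [hfo_spec, mem_decode_encode_finset, Finset.mem_image, Set.Finite.mem_toFinset,
      Prod.exists]
    exact exists₂_congr fun _ _ => and_congr Iff.rfl eq_comm
  · by_cases hs : s ∈ T.final
    · simp [(hff_spec s).1 hs, hs]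
    · simp [(hff_spec s).2 hs, hs]

def HasFiniteNonfinalTauClosure (T : LTS A) (v : T.State) : Prop :=
  {v' | T.tauReach v v'}.Finite ∧ ∀ v', T.tauReach v v' → v' ∉ T.final

namespace ComputablePresentation

variable (P : T.ComputablePresentation)

def step (km : ℕ × ℕ) (n : ℕ) : Option ℕ :=
  if Nat.pair km.1 km.2 ∈ P.outCodes n then some km.2 else none

def walk (n : ℕ) (steps : List (ℕ × ℕ)) : Option ℕ :=
  steps.foldlM (fun n km => P.step km n) n

def visibleCodes (steps : List (ℕ × ℕ)) : List ℕ :=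
  (steps.map Prod.fst).filter (· ≠ P.codeLabel none)

def tauSuccCodes (n : ℕ) : List ℕ :=
  ((P.outCodes n).filter (·.unpair.1 = P.codeLabel none)).map (·.unpair.2)

def tauClosed (L : List ℕ) : Bool :=
  L.all fun n => (P.tauSuccCodes n).all (· ∈ L)

def certifies (ws : List ℕ) (c : List (ℕ × ℕ) × List ℕ) : Bool :=
  (P.walk (P.codeState T.init) c.1).any (· ∈ c.2) && decide (P.visibleCodes c.1 = ws) &&
    P.tauClosed c.2 && c.2.all fun n => !P.isFinal n

variable {P}

theorem step_eq_some {u : T.State} {k m e : ℕ} :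
    P.step (k, m) (P.codeState u) = some e ↔
      e = m ∧ ∃ a t, T.tr u a t ∧ k = P.codeLabel a ∧ m = P.codeState t := by
  rw [step]
  split_ifs with h <;> rw [P.mem_outCodes] at h <;> simp only [Nat.pair_eq_pair] at h
  · exact ⟨fun he => ⟨(Option.some.inj he).symm, h⟩, fun ⟨he, _⟩ => congrArg some he.symm⟩
  · simp [h]

theorem walk_cons (n : ℕ) (km : ℕ × ℕ) (steps : List (ℕ × ℕ)) :
    P.walk n (km :: steps) = (P.step km n).bind (P.walk · steps) :=
  rfl

theorem visibleCodes_cons (a : Option A) (m : ℕ) (steps : List (ℕ × ℕ)) :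
    P.visibleCodes ((P.codeLabel a, m) :: steps) =
      (a.map (P.codeLabel ∘ some)).toList ++ P.visibleCodes steps := by
  cases a with
  | none => simp [visibleCodes]
  | some a => simp [visibleCodes, P.codeLabel_injective.ne (Option.some_ne_none a)]

theorem exists_weakReaches_of_walk {u : T.State} {steps : List (ℕ × ℕ)} {e : ℕ}
    (h : P.walk (P.codeState u) steps = some e) :
    ∃ w v, T.WeakReaches u w v ∧ e = P.codeState v ∧
      P.visibleCodes steps = w.map (P.codeLabel ∘ some) := by
  induction steps generalizing u with
  | nil => exact ⟨[], u, .refl u, (Option.some.inj h).symm, rfl⟩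
  | cons km steps ih =>
    obtain ⟨k, m⟩ := km
    obtain ⟨n, hn, hrest⟩ := Option.bind_eq_some_iff.1 ((walk_cons _ _ _).symm.trans h)
    obtain ⟨rfl, a, t, htr, rfl, rfl⟩ := step_eq_some.1 hn
    obtain ⟨w, v, hwv, rfl, hvis⟩ := ih hrest
    refine ⟨a.toList ++ w, v, .of_optStep (Or.inl htr) hwv, rfl, ?_⟩
    rw [visibleCodes_cons, hvis]
    cases a <;> rfl

theorem exists_walk_of_weakReaches {u v : T.State} {w : List A} (h : T.WeakReaches u w v) :
    ∃ steps, P.walk (P.codeState u) steps = some (P.codeState v) ∧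
      P.visibleCodes steps = w.map (P.codeLabel ∘ some) := by
  induction h with
  | refl u => exact ⟨[], rfl, rfl⟩
  | @tau u t _ _ htr _ ih =>
    obtain ⟨steps, hwalk, hvis⟩ := ih
    refine ⟨(P.codeLabel none, P.codeState t) :: steps, ?_, by rw [visibleCodes_cons, hvis]; rfl⟩
    rw [walk_cons, step_eq_some.2 ⟨rfl, _, _, htr, rfl, rfl⟩]
    exact hwalk
  | @visible u t _ a _ htr _ ih =>
    obtain ⟨steps, hwalk, hvis⟩ := ih
    refine ⟨(P.codeLabel (some a), P.codeState t) :: steps, ?_,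
      by rw [visibleCodes_cons, hvis]; rfl⟩
    rw [walk_cons, step_eq_some.2 ⟨rfl, _, _, htr, rfl, rfl⟩]
    exact hwalk

theorem mem_tauSuccCodes {u : T.State} {m : ℕ} :
    m ∈ P.tauSuccCodes (P.codeState u) ↔ ∃ t, T.tauStep u t ∧ m = P.codeState t := by
  simp only [tauSuccCodes, List.mem_map, List.mem_filter, P.mem_outCodes, decide_eq_true_eq]
  constructor
  · rintro ⟨_, ⟨⟨a, t, htr, rfl⟩, hlabel⟩, rfl⟩
    rw [Nat.unpair_pair] at hlabel ⊢
    cases P.codeLabel_injective hlabel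
    exact ⟨t, htr, rfl⟩
  · rintro ⟨t, htr, rfl⟩
    exact ⟨_, ⟨⟨none, t, htr, rfl⟩, by rw [Nat.unpair_pair]⟩, by rw [Nat.unpair_pair]⟩

theorem mem_of_tauClosed {L : List ℕ} (hL : P.tauClosed L = true) {u v : T.State}
    (hu : P.codeState u ∈ L) (h : T.tauReach u v) : P.codeState v ∈ L := by
  simp only [tauClosed, List.all_eq_true, decide_eq_true_eq] at hL
  induction h with
  | refl => exact hu
  | tail _ hstep ih => exact hL _ ih _ (mem_tauSuccCodes.2 ⟨_, hstep, rfl⟩)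

theorem exists_tauClosed {u : T.State} (hfin : {v | T.tauReach u v}.Finite) :
    ∃ L, P.tauClosed L = true ∧ ∀ n, n ∈ L ↔ ∃ v, T.tauReach u v ∧ n = P.codeState v := by
  have hmem : ∀ n, n ∈ (hfin.image P.codeState).toFinset.toList ↔
      ∃ v, T.tauReach u v ∧ n = P.codeState v := by
    simp [eq_comm]
  refine ⟨_, ?_, hmem⟩
  simp only [tauClosed, List.all_eq_true, decide_eq_true_eq, hmem]
  rintro _ ⟨v, hv, rfl⟩ m hm
  obtain ⟨t, ht, rfl⟩ := mem_tauSuccCodes.1 hm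
  exact ⟨t, hv.tail ht, rfl⟩

theorem exists_certifies_iff (ws : List ℕ) :
    (∃ c, P.certifies ws c = true) ↔ ∃ w v, ws = w.map (P.codeLabel ∘ some) ∧
      T.WeakReaches T.init w v ∧ T.HasFiniteNonfinalTauClosure v := by
  simp only [certifies, Bool.and_eq_true, Option.any_eq_true, decide_eq_true_eq,
    List.all_eq_true, Bool.not_eq_true']
  constructor
  · rintro ⟨⟨steps, L⟩, ⟨⟨⟨e, hwalk, he⟩, rfl⟩, hclosed⟩, hnonfinal⟩
    obtain ⟨w, v, hwv, rfl, hvis⟩ := exists_weakReaches_of_walk hwalk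
    have hreach : ∀ v', T.tauReach v v' → P.codeState v' ∈ L :=
      fun v' => mem_of_tauClosed hclosed he
    refine ⟨w, v, hvis, hwv, ?_, fun v' hv' hfinal => ?_⟩
    · exact (L.finite_toSet.preimage P.codeState_injective.injOn).subset hreach
    · simpa [(P.isFinal_iff v').2 hfinal] using hnonfinal _ (hreach v' hv')
  · rintro ⟨w, v, rfl, hwv, hfin, hnonfinal⟩
    obtain ⟨steps, hwalk, hvis⟩ := exists_walk_of_weakReaches (P := P) hwv
    obtain ⟨L, hclosed, hL⟩ := exists_tauClosed (P := P) hfin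
    refine ⟨(steps, L), ⟨⟨⟨_, hwalk, (hL _).2 ⟨v, .refl, rfl⟩⟩, hvis⟩, hclosed⟩, ?_⟩
    intro n hn
    obtain ⟨v', hv', rfl⟩ := (hL n).1 hn
    exact Bool.eq_false_iff.2 fun h => hnonfinal v' hv' ((P.isFinal_iff v').1 h)

variable (P)

open Computable

theorem computable_step : Computable₂ P.step := by
  have hmem : Computable fun p : (ℕ × ℕ) × ℕ => decide (Nat.pair p.1.1 p.1.2 ∈ P.outCodes p.2) :=
    Primrec.list_mem.decide.to_comp.comp (P.outCodes_computable.comp snd)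
      (Primrec₂.natPair.to_comp.comp (fst.comp fst) (snd.comp fst))
  refine (cond hmem (option_some.comp (snd.comp fst)) (const none)).of_eq fun _ => ?_
  simp [step, Bool.cond_decide]

theorem computable_walk : Computable₂ P.walk := by
  have hfold := Computable.list_foldl (f := fun p : ℕ × List (ℕ × ℕ) => p.2)
    (g := fun p => some p.1) (h := fun _ q => q.1.bind (P.step q.2)) snd (option_some.comp fst)
    (option_bind (fst.comp snd) ((P.computable_step.comp (snd.comp (snd.comp fst)) snd).to₂)).to₂
  refine hfold.of_eq fun p => ?_
  simp only [walk, List.foldlM_eq_foldl]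
  rfl

theorem primrec_visibleCodes : Primrec P.visibleCodes :=
  (Primrec.listFilter (Primrec.eq.comp Primrec.id (Primrec.const _)).not).comp
    (Primrec.list_map Primrec.id (Primrec.fst.comp Primrec.snd).to₂)

theorem computable_tauSuccCodes : Computable P.tauSuccCodes :=
  (Primrec.list_map
    (Primrec.listFilter (Primrec.eq.comp (Primrec.fst.comp Primrec.unpair) (Primrec.const _)))
    (Primrec.snd.comp (Primrec.unpair.comp Primrec.snd)).to₂).to_comp.comp P.outCodes_computable

theorem computable_tauClosed : Computable P.tauClosed :=
  Computable.list_all Computable.id (Computable.list_all (P.computable_tauSuccCodes.comp snd)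
    (Primrec.list_mem.decide.to_comp.comp (fst.comp fst) snd).to₂).to₂

theorem computable_certifies : Computable₂ P.certifies := by
  have hand : Computable₂ and := Primrec.and.to_comp
  have hwalk : Computable fun p : List ℕ × List (ℕ × ℕ) × List ℕ =>
      (P.walk (P.codeState T.init) p.2.1).any (· ∈ p.2.2) :=
    (option_getD (option_map (P.computable_walk.comp (const _) (fst.comp snd))
      (Primrec.list_mem.decide.to_comp.comp (snd.comp (snd.comp fst)) snd).to₂)
        (const false)).of_eq fun p => by cases P.walk _ _ <;> rfl
  have hvisible : Computable fun p : List ℕ × List (ℕ × ℕ) × List ℕ =>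
      decide (P.visibleCodes p.2.1 = p.1) :=
    Primrec.eq.decide.to_comp.comp (P.primrec_visibleCodes.to_comp.comp (fst.comp snd)) fst
  have hnonfinal : Computable fun p : List ℕ × List (ℕ × ℕ) × List ℕ =>
      p.2.2.all fun n => !P.isFinal n :=
    Computable.list_all (snd.comp snd)
      (Primrec.not.to_comp.comp (P.isFinal_computable.comp snd)).to₂
  exact hand.comp (hand.comp (hand.comp hwalk hvisible)
    (P.computable_tauClosed.comp (snd.comp snd))) hnonfinal

theorem rePred_exists_weakReaches :
    REPred fun ws : List ℕ => ∃ w v, ws = w.map (P.codeLabel ∘ some) ∧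
      T.WeakReaches T.init w v ∧ T.HasFiniteNonfinalTauClosure v :=
  (REPred.exists_eq_true P.computable_certifies).of_eq P.exists_certifies_iff

end ComputablePresentation

end LTS

def DiagonalHalts (x : ℕ) : Prop := ((Denumerable.ofNat Nat.Partrec.Code x).eval x).Dom

theorem not_rePred_not_diagonalHalts : ¬ REPred fun x => ¬ DiagonalHalts x := by
  intro h
  apply ComputablePred.halting_problem_not_re 0
  have hcode : Computable fun c : Nat.Partrec.Code =>
      Encodable.encode (c.comp (Nat.Partrec.Code.const 0)) :=
    (Primrec.encode.comp
      (Nat.Partrec.Code.primrec₂_comp.comp Primrec.id (Primrec.const _))).to_comp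
  -- `c.comp (const 0)` runs `c` on `0`, whatever its input
  refine (h.comp hcode).of_eq fun c => ?_
  simp only [DiagonalHalts, Denumerable.ofNat_encode, Nat.Partrec.Code.eval,
    Nat.Partrec.Code.eval_const]
  exact not_congr ⟨fun ⟨_, h⟩ => h, fun h => ⟨trivial, h⟩⟩

theorem T1_tauFree : T1.TauFree := by
  rintro _ _ (⟨_, _, h, _⟩ | ⟨_, _, h, _⟩) <;> cases h

theorem T1_tr_s_iff {x : ℕ} {α : Option AB} {q : T1.State} :
    T1.tr (.s x) α q ↔ α = some .a ∧ q = .s (x + 1) ∨ α = some .b ∧ q = .t x := by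
  simp [T1]

theorem T1_not_tr_t {x : ℕ} {α : Option AB} {q : T1.State} : ¬ T1.tr (.t x) α q := by
  simp [T1]

theorem T1_final_iff {x : ℕ} : T1State.t x ∈ T1.final ↔ DiagonalHalts x :=
  ⟨fun ⟨_, hx, h⟩ => by cases hx; exact h, fun h => ⟨x, rfl, h⟩⟩

theorem T1_weakReaches_iff (i j : ℕ) (q : T1.State) :
    T1.WeakReaches (.s i) (List.replicate j .a ++ [.b]) q ↔ q = .t (i + j) := by
  induction j generalizing i with
  | zero =>
    refine T1_tauFree.weakReaches_cons_iff.trans ⟨?_, ?_⟩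
    · rintro ⟨t, hstep, hrest⟩
      obtain ⟨h, -⟩ | ⟨-, rfl⟩ := T1_tr_s_iff.1 hstep
      · cases h
      · exact (T1_tauFree.weakReaches_nil_iff.1 hrest).symm
    · rintro rfl
      exact ⟨_, T1_tr_s_iff.2 (Or.inr ⟨rfl, rfl⟩), .refl _⟩
  | succ j ih =>
    refine T1_tauFree.weakReaches_cons_iff.trans ⟨?_, ?_⟩
    · rintro ⟨t, hstep, hrest⟩
      obtain ⟨-, rfl⟩ | ⟨h, -⟩ := T1_tr_s_iff.1 hstep
      · exact ((ih _).1 hrest).trans (congrArg _ (by omega))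
      · cases h
    · rintro rfl
      exact ⟨_, T1_tr_s_iff.2 (Or.inl ⟨rfl, rfl⟩), (ih _).2 (congrArg _ (by omega))⟩

theorem IsBranchingBisimulation.not_diagonalHalts_iff {T' : LTS AB}
    {R : T1.State → T'.State → Prop} (hR : IsBranchingBisimulation T1 T' R)
    (hD : DivergencePreserving T1 T' R) (hinit : R T1.init T'.init)
    (hT' : T'.FinitelyBranching) (x : ℕ) :
    ¬ DiagonalHalts x ↔ ∃ v, T'.WeakReaches T'.init (List.replicate x .a ++ [.b]) v ∧
      T'.HasFiniteNonfinalTauClosure v := by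
  constructor
  · intro hx
    obtain ⟨v, hv, hRv⟩ :=
      hR.weakReaches hinit ((T1_weakReaches_iff 0 x (.t x)).2 (congrArg _ (zero_add x).symm))
    refine ⟨v, hv, T'.finite_tauReach_of_acc hT' (hR.acc_tauStep hD T1_tauFree hRv),
      fun v' hv' hfinal => hx ?_⟩
    obtain ⟨s, hs, -, hsfinal⟩ := hR.finBwd _ _ (hR.rel_of_tauReach T1_tauFree hRv hv') hfinal
    rw [← T1_tauFree.eq_of_tauReach hs] at hsfinal
    exact T1_final_iff.1 hsfinal
  · rintro ⟨v, hv, -, hnonfinal⟩ hx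
    obtain ⟨s, hs, hRs⟩ := hR.symm.weakReaches hinit hv
    obtain rfl := (T1_weakReaches_iff 0 x s).1 hs
    obtain ⟨v', hv', -, hfinal⟩ := hR.finFwd _ _ hRs (T1_final_iff.2 (by rwa [zero_add]))
    exact hnonfinal v' hv' hfinal

/-- No computable transition system is divergence-preserving
branching bisimilar to `T₁`. -/
theorem T1_not_simulable_divergence_preservingly :
    ∀ T' : LTS AB, T'.IsComputable → ¬ DPBranchingBisimilar T1 T' := by
  rintro T' hT' ⟨R, hR, hD, hinit⟩
  obtain ⟨P⟩ := hT'.nonempty_presentation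
  have hcode : Computable fun x => (List.replicate x AB.a ++ [AB.b]).map (P.codeLabel ∘ some) :=
    ((Primrec.list_append.comp (Primrec.list_replicate (P.codeLabel (some .a)))
      (Primrec.const [P.codeLabel (some .b)])).to_comp).of_eq
      fun x => by simp [List.map_replicate]
  have hinj := List.map_injective_iff.2 (P.codeLabel_injective.comp (Option.some_injective AB))
  refine not_rePred_not_diagonalHalts ((P.rePred_exists_weakReaches.comp hcode).of_eq fun x => ?_)
  rw [hR.not_diagonalHalts_iff hD hinit hT'.finitelyBranching]
  constructor
  · rintro ⟨w, v, hw, hv⟩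
    obtain rfl := hinj hw
    exact ⟨v, hv⟩
  · rintro ⟨v, hv⟩
    exact ⟨_, v, rfl, hv⟩

end RTMPaper
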